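/- For all real parameters a and all w, θ ∈ ℝ, the quantity r_θ := √2·w·∫_ℝ R(U(z)) dz + 4θ·∫_0^{+∞} z·R(U(z)) dz equals w√2·(1/2 − a) + 2θ·( −1/2 − (2a−1)·log 2 ). -/

import Mathlib

open Real MeasureTheory

/-- The bistable reaction term `R(u) = u(1-u)(u-a)`. -/
noncomputable def R (a u : ℝ) : ℝ := u * (1 - u) * (u - a)

/-- The kink profile `U(z) = 1/(1+exp z)`. -/
noncomputable def U (z : ℝ) : ℝ := 1 / (1 + Real.exp z)

/-!
The kink is the reflected logistic sigmoid, `U z = σ(-z)`, so `U' = -U(1-U)` and `R(U)` is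
`U(1-U)` times the polynomial `U - a`. The substitution `u = U z` therefore turns
`∫_ℝ R(U)` into `∫_0^1 (u - a) du = 1/2 - a`. For the first moment, `R(U)` is the derivative of
`U (a - U/2)`, which vanishes at `+∞` faster than `1/z`; integrating by parts gives
`∫_0^∞ z R(U) = -∫_0^∞ U (a - U/2)`, and the same substitution, now onto `(0, 1/2)`, evaluates this
as `∫_0^{1/2} (a - u/2)/(1 - u) du = 1/4 + (a - 1/2) log 2`.
-/

open Set Filter Topology

lemma U_eq_sigmoid_comp_neg : U = sigmoid ∘ Neg.neg := by
  ext z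
  rw [U, Function.comp_apply, sigmoid_def, neg_neg, one_div]

lemma U_pos (z : ℝ) : 0 < U z := U_eq_sigmoid_comp_neg ▸ sigmoid_pos _

lemma U_lt_one (z : ℝ) : U z < 1 := U_eq_sigmoid_comp_neg ▸ sigmoid_lt_one _

lemma U_zero : U 0 = 1 / 2 := by norm_num [U]

lemma strictAnti_U : StrictAnti U :=
  U_eq_sigmoid_comp_neg ▸ sigmoid_strictMono.comp_strictAnti fun _ _ h => neg_lt_neg h

@[fun_prop]
lemma continuous_U : Continuous U :=
  U_eq_sigmoid_comp_neg ▸ continuous_sigmoid.comp continuous_neg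

lemma hasDerivAt_U (z : ℝ) : HasDerivAt U (-(U z * (1 - U z))) z := by
  rw [U_eq_sigmoid_comp_neg]
  simpa using (hasDerivAt_sigmoid (-z)).comp z (hasDerivAt_neg z)

lemma range_U : range U = Ioo 0 1 := by
  rw [U_eq_sigmoid_comp_neg, neg_surjective.range_comp, range_sigmoid]

lemma image_U_Ioi_zero : U '' Ioi 0 = Ioo 0 (1 / 2) := by
  have hpreimage : Ioi 0 = U ⁻¹' Iio (U 0) := by
    ext z; exact strictAnti_U.lt_iff_gt.symm
  rw [hpreimage, image_preimage_eq_range_inter, range_U, U_zero, Ioo_inter_Iio,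
    min_eq_right (by norm_num)]

lemma tendsto_U_atTop : Tendsto U atTop (𝓝 0) :=
  U_eq_sigmoid_comp_neg ▸ tendsto_sigmoid_atBot.comp tendsto_neg_atTop_atBot

lemma U_le_exp_neg (z : ℝ) : U z ≤ exp (-z) := by
  rw [U, exp_neg, one_div]
  exact inv_anti₀ (exp_pos z) (by linarith [exp_pos z])

lemma tendsto_mul_U_atTop : Tendsto (fun z => z * U z) atTop (𝓝 0) := by
  refine tendsto_of_tendsto_of_tendsto_of_le_of_le' tendsto_const_nhds
    (by simpa using tendsto_pow_mul_exp_neg_atTop_nhds_zero 1) ?_ ?_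
  · filter_upwards [eventually_ge_atTop 0] with z hz using mul_nonneg hz (U_pos z).le
  · filter_upwards [eventually_ge_atTop 0] with z hz
    simpa using mul_le_mul_of_nonneg_left (U_le_exp_neg z) hz

lemma integral_image_U {s : Set ℝ} (hs : MeasurableSet s) (g : ℝ → ℝ) :
    ∫ u in U '' s, g u = ∫ z in s, U z * (1 - U z) * g (U z) := by
  rw [integral_image_eq_integral_abs_deriv_smul hs (fun z _ => (hasDerivAt_U z).hasDerivWithinAt)
    strictAnti_U.injective.injOn]
  congr with z
  rw [abs_neg, abs_of_pos (mul_pos (U_pos z) (sub_pos.2 (U_lt_one z))), smul_eq_mul]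

lemma integrableOn_Ioi_pow_mul_U (n : ℕ) : IntegrableOn (fun z => z ^ n * U z) (Ioi 0) := by
  have hGamma := GammaIntegral_convergent (s := n + 1) (by positivity)
  simp only [add_sub_cancel_right, rpow_natCast] at hGamma
  refine hGamma.mono' ((continuous_pow n).mul continuous_U).aestronglyMeasurable ?_
  filter_upwards [ae_restrict_mem measurableSet_Ioi] with z (hz : 0 < z)
  rw [norm_mul, norm_pow, norm_of_nonneg hz.le, norm_of_nonneg (U_pos z).le, mul_comm]
  exact mul_le_mul_of_nonneg_right (U_le_exp_neg z) (by positivity)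

lemma integrableOn_Ioi_pow_mul_U_mul (n : ℕ) {h : ℝ → ℝ} (hh : Continuous h) :
    IntegrableOn (fun z => z ^ n * U z * h (U z)) (Ioi 0) := by
  obtain ⟨C, hC⟩ := isCompact_Icc.exists_bound_of_continuousOn (hh.continuousOn (s := Icc 0 1))
  exact (integrableOn_Ioi_pow_mul_U n).mul_bdd (hh.comp continuous_U).aestronglyMeasurable
    (ae_of_all _ fun z => hC _ ⟨(U_pos z).le, (U_lt_one z).le⟩)

lemma hasDerivAt_primitive_R_comp_U (a z : ℝ) :
    HasDerivAt (fun z => U z * (a - U z / 2)) (R a (U z)) z := by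
  have h := (hasDerivAt_U z).mul (((hasDerivAt_U z).div_const 2).const_sub a)
  exact h.congr_deriv (by rw [R]; ring)

lemma integral_Ioi_mul_R_comp_U (a : ℝ) :
    ∫ z in Ioi 0, z * R a (U z) = -∫ z in Ioi 0, U z * (a - U z / 2) := by
  have hint_moment : IntegrableOn (fun z => z * R a (U z)) (Ioi 0) :=
    (integrableOn_Ioi_pow_mul_U_mul 1 (h := fun u => (1 - u) * (u - a)) (by fun_prop)).congr_fun
      (fun z _ => by rw [R]; ring) measurableSet_Ioi
  have hint_primitive : IntegrableOn (fun z => U z * (a - U z / 2)) (Ioi 0) := by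
    simpa using integrableOn_Ioi_pow_mul_U_mul 0 (h := fun u => a - u / 2) (by fun_prop)
  have hcont : Continuous fun z => z * (U z * (a - U z / 2)) := by fun_prop
  have hlim_zero : Tendsto (fun z => z * (U z * (a - U z / 2))) (𝓝[>] 0) (𝓝 0) := by
    simpa only [zero_mul] using (hcont.tendsto 0).mono_left nhdsWithin_le_nhds
  have hlim_atTop : Tendsto (fun z => z * (U z * (a - U z / 2))) atTop (𝓝 0) := by
    simpa only [mul_assoc, zero_mul] using
      tendsto_mul_U_atTop.mul (tendsto_const_nhds (x := a).sub (tendsto_U_atTop.div_const 2))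
  simpa using integral_Ioi_mul_deriv_eq_deriv_mul (fun z _ => hasDerivAt_id' z)
    (fun z _ => hasDerivAt_primitive_R_comp_U a z) hint_moment
    (by simpa only [Pi.mul_def, one_mul] using hint_primitive) hlim_zero hlim_atTop

lemma integral_sub_half_div_one_sub (a : ℝ) :
    ∫ u in (0 : ℝ)..1 / 2, (a - u / 2) / (1 - u) = 1 / 4 + (a - 1 / 2) * log 2 := by
  have h1u : ∀ u ∈ uIcc (0 : ℝ) (1 / 2), 1 - u ≠ 0 := fun u hu => by
    rw [uIcc_of_le (by norm_num)] at hu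
    linarith [hu.2]
  have hderiv : ∀ u ∈ uIcc (0 : ℝ) (1 / 2),
      HasDerivAt (fun u => u / 2 - (a - 1 / 2) * log (1 - u)) ((a - u / 2) / (1 - u)) u :=
    fun u hu => by
      have h := ((hasDerivAt_id' u).div_const 2).sub
        ((((hasDerivAt_id' u).const_sub 1).log (h1u u hu)).const_mul (a - 1 / 2))
      refine h.congr_deriv ?_
      field_simp [h1u u hu]
      ring
  have hcont : ContinuousOn (fun u => (a - u / 2) / (1 - u)) (uIcc 0 (1 / 2)) :=
    fun u hu => (by fun_prop (disch := exact h1u u hu) : ContinuousAt _ u).continuousWithinAt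
  rw [intervalIntegral.integral_eq_sub_of_hasDerivAt hderiv hcont.intervalIntegrable]
  norm_num
  simp only [one_div, log_inv]
  ring

lemma integral_Ioi_U_mul (a : ℝ) :
    ∫ z in Ioi 0, U z * (a - U z / 2) = 1 / 4 + (a - 1 / 2) * log 2 := by
  have hsubst := integral_image_U (measurableSet_Ioi (a := 0)) (fun u => (a - u / 2) / (1 - u))
  rw [image_U_Ioi_zero, ← integral_Ioc_eq_integral_Ioo,
    ← intervalIntegral.integral_of_le (by norm_num), integral_sub_half_div_one_sub] at hsubst
  rw [hsubst]
  congr with z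
  have h1U : 1 - U z ≠ 0 := (sub_pos.2 (U_lt_one z)).ne'
  field_simp

lemma integral_R_comp_U (a : ℝ) : ∫ z, R a (U z) = 1 / 2 - a := by
  have hsubst := integral_image_U MeasurableSet.univ (fun u => u - a)
  rw [image_univ, range_U, ← integral_Ioc_eq_integral_Ioo,
    ← intervalIntegral.integral_of_le zero_le_one, Measure.restrict_univ] at hsubst
  calc ∫ z, R a (U z) = ∫ u in (0 : ℝ)..1, (u - a) := hsubst.symm
    _ = 1 / 2 - a := by norm_num [intervalIntegral.integral_sub]

/-- For all real parameters `a` and all `w, θ ∈ ℝ`, the effective driving force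
`r_θ = √2·w·∫_ℝ R(U(z)) dz + 4θ·∫_0^{+∞} z·R(U(z)) dz` at the junction between a
waveguide of width `w` and a cone of half-angle `θ` equals
`w√2·(1/2 − a) + 2θ·( −1/2 − (2a−1)·log 2 )`. -/
theorem driving_force_cone (a w θ : ℝ) :
    Real.sqrt 2 * w * (∫ z : ℝ, R a (U z))
        + 4 * θ * ∫ z in Set.Ioi (0 : ℝ), z * R a (U z) =
      w * Real.sqrt 2 * (1 / 2 - a)
        + 2 * θ * (-(1 / 2) - (2 * a - 1) * Real.log 2) := by
  rw [integral_R_comp_U, integral_Ioi_mul_R_comp_U, integral_Ioi_U_mul]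
  ring
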